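/- Let G be a finite nonabelian simple group and let b be a positive integer such that every faithful primitive action of G on a set has a base of size at most b. Then G is totally (b+1)-closed; in particular, the closure number satisfies k(G) ≤ b + 1. -/

import Mathlib

universe u v

/-- The `k`-closure of a set `S` of permutations of `Ω`. -/
def kClosure {Ω : Type*} (S : Set (Equiv.Perm Ω)) (k : ℕ) : Set (Equiv.Perm Ω) :=
  {g | ∀ f : Fin k → Ω, ∃ h ∈ S, ∀ i, g (f i) = h (f i)}

/-- A group `G` is totally `k`-closed if for every set `Ω` on which `G` acts faithfully,
the induced permutation group `G^Ω` equals its own `k`-closure. -/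
def TotallyClosed (G : Type u) [Group G] (k : ℕ) : Prop :=
  ∀ (Ω : Type v) (φ : G →* Equiv.Perm Ω), Function.Injective ⇑φ →
    kClosure (Set.range ⇑φ) k = Set.range ⇑φ

/-- The closure number of a group `G`: the least positive integer `k` such that `G` is
totally `k`-closed. -/
noncomputable def closureNumber (G : Type u) [Group G] : ℕ :=
  sInf {k : ℕ | 0 < k ∧ TotallyClosed.{u, v} G k}

/-- The action of `G` on `Ω` given by `φ : G →* Sym(Ω)` is primitive: it is transitive, and
every block for the action is a singleton (or empty) or the whole of `Ω`. -/
def IsPrimitiveAction {G : Type u} [Group G] {Ω : Type v} (φ : G →* Equiv.Perm Ω) : Prop :=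
  (∀ x y : Ω, ∃ g : G, φ g x = y) ∧
  ∀ B : Set Ω, (∀ g : G, φ g '' B = B ∨ Disjoint (φ g '' B) B) →
    B.Subsingleton ∨ B = Set.univ

/-!
A faithful action of `G` on `Ω` has a base of size `b`. Indeed, pick a point `α` moved by `G`
and a maximal subgroup `M ≥ G_α`. Since `G` is simple, it acts faithfully and primitively on
`G ⧸ M` (moved into universe `v` by `Shrink`), so some cosets `r₁ M, …, r_b M` form a base there;
as `G_{rᵢ • α} = rᵢ G_α rᵢ⁻¹ ≤ rᵢ M rᵢ⁻¹`, the points `rᵢ • α` form a base of `Ω`.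
Given a base `β` of size `b`, a permutation in the `(b + 1)`-closure agrees on `β` and any further
point `ω` with some element of `G`; all these elements coincide, since they agree on `β`.
-/

open MulAction

section Closure

variable {G Ω : Type*} [Group G]

theorem subset_kClosure (S : Set (Equiv.Perm Ω)) (k : ℕ) : S ⊆ kClosure S k :=
  fun g hg _ => ⟨g, hg, fun _ => rfl⟩

theorem eq_of_forall_apply_eq_of_base (φ : G →* Equiv.Perm Ω) {b : ℕ} {f : Fin b → Ω}
    (hf : ∀ g : G, (∀ i, φ g (f i) = f i) → g = 1) {g₁ g₂ : G}
    (h : ∀ i, φ g₁ (f i) = φ g₂ (f i)) : g₁ = g₂ := by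
  refine inv_mul_eq_one.mp (hf _ fun i => ?_)
  rw [map_mul, map_inv, Equiv.Perm.mul_apply, ← h]
  exact (φ g₁).symm_apply_apply (f i)

theorem kClosure_succ_eq_range_of_base (φ : G →* Equiv.Perm Ω) {b : ℕ} {f : Fin b → Ω}
    (hf : ∀ g : G, (∀ i, φ g (f i) = f i) → g = 1) :
    kClosure (Set.range φ) (b + 1) = Set.range φ := by
  refine (subset_kClosure _ _).antisymm' fun x hx => ?_
  have agree : ∀ ω, ∃ h : G, x ω = φ h ω ∧ ∀ i, x (f i) = φ h (f i) := fun ω => by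
    obtain ⟨_, ⟨h, rfl⟩, hxh⟩ := hx (Fin.cons ω f)
    exact ⟨h, hxh 0, fun i => hxh i.succ⟩
  cases isEmpty_or_nonempty Ω with
  | inl _ => exact ⟨1, Subsingleton.elim _ _⟩
  | inr _ =>
    obtain ⟨h₀, -, hx₀⟩ := agree (Classical.arbitrary Ω)
    refine ⟨h₀, Equiv.ext fun ω => ?_⟩
    obtain ⟨h, hxω, hxf⟩ := agree ω
    rw [hxω, eq_of_forall_apply_eq_of_base φ hf fun i => (hx₀ i).symm.trans (hxf i)]

end Closure

section Primitive

variable {G : Type u} [Group G]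

theorem isPrimitiveAction_toPermHom {X : Type v} [MulAction G X] [IsPreprimitive G X] :
    IsPrimitiveAction (toPermHom G X) := by
  refine ⟨exists_smul_eq G, fun B hB => IsPreprimitive.isTrivialBlock_of_isBlock (G := G) ?_⟩
  simpa only [isBlock_iff_smul_eq_or_disjoint, toPermHom_apply, toPerm_apply, Set.image_smul]
    using hB

theorem isPreprimitive_quotient_of_isCoatom {M : Subgroup G} (hM : IsCoatom M) :
    IsPreprimitive G (G ⧸ M) := by
  have : Nontrivial (G ⧸ M) := QuotientGroup.nontrivial_iff.mpr hM.1
  rwa [← isCoatom_stabilizer_iff_preprimitive G ((1 : G) : G ⧸ M), stabilizer_quotient]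

theorem faithfulSMul_quotient_of_ne_top [IsSimpleGroup G] {M : Subgroup G} (hM : M ≠ ⊤) :
    FaithfulSMul G (G ⧸ M) := by
  have hker : (toPermHom G (G ⧸ M)).ker = ⊥ := by
    rw [← Subgroup.normalCore_eq_ker]
    exact (IsSimpleGroup.eq_bot_or_eq_top_of_normal _ M.normalCore_normal).resolve_right
      fun h => hM (eq_top_iff.mpr (h ▸ M.normalCore_le))
  exact ⟨fun h => (toPermHom G (G ⧸ M)).ker_eq_bot_iff.mp hker (Equiv.ext h)⟩

variable {X : Type*} [MulAction G X] [Small.{v} X]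

instance isPreprimitive_shrink [IsPreprimitive G X] : IsPreprimitive G (Shrink.{v} X) :=
  IsPreprimitive.of_surjective (f := { toFun := equivShrink X, map_smul' := equivShrink_smul })
    (equivShrink X).surjective

instance faithfulSMul_shrink [FaithfulSMul G X] : FaithfulSMul G (Shrink.{v} X) :=
  ⟨fun h => eq_of_smul_eq_smul fun x => by
    simpa using congrArg (equivShrink X).symm (h (equivShrink X x))⟩

end Primitive

section Base

variable {G Ω : Type*} [Group G] [MulAction G Ω]

theorem stabilizer_smul_le_stabilizer_coe {M : Subgroup G} {α : Ω} (hα : stabilizer G α ≤ M)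
    (r : G) : stabilizer G (r • α) ≤ stabilizer G (r : G ⧸ M) := by
  have : (r : G ⧸ M) = r • ((1 : G) : G ⧸ M) := by simp
  rw [this, stabilizer_smul_eq_stabilizer_map_conj, stabilizer_smul_eq_stabilizer_map_conj,
    stabilizer_quotient]
  exact Subgroup.map_mono hα

theorem exists_stabilizer_le_isCoatom [Finite G] [Nontrivial G] [FaithfulSMul G Ω] :
    ∃ (α : Ω) (M : Subgroup G), IsCoatom M ∧ stabilizer G α ≤ M := by
  obtain ⟨g, hg⟩ := exists_ne (1 : G)
  obtain ⟨α, hα⟩ : ∃ α : Ω, g • α ≠ α := by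
    by_contra! h
    exact hg (eq_of_smul_eq_smul fun α => by rw [h, one_smul])
  obtain ⟨M, hM, hle⟩ := (eq_top_or_exists_le_coatom (stabilizer G α)).resolve_left
    fun h => hα (mem_stabilizer_iff.mp (h ▸ Subgroup.mem_top g))
  exact ⟨α, M, hM, hle⟩

end Base

theorem exists_base_of_primitive_base_bound {G : Type u} [Group G] [Finite G] [IsSimpleGroup G]
    {b : ℕ} (hbase : ∀ (Ω : Type v) (φ : G →* Equiv.Perm Ω), Function.Injective ⇑φ →
      IsPrimitiveAction φ →
      ∃ f : Fin b → Ω, ∀ g : G, (∀ i, φ g (f i) = f i) → g = 1)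
    {Ω : Type*} (φ : G →* Equiv.Perm Ω) (hφ : Function.Injective φ) :
    ∃ f : Fin b → Ω, ∀ g : G, (∀ i, φ g (f i) = f i) → g = 1 := by
  let _ : MulAction G Ω := compHom Ω φ
  have : FaithfulSMul G Ω := ⟨fun h => hφ (Equiv.ext h)⟩
  obtain ⟨α, M, hM, hαM⟩ := exists_stabilizer_le_isCoatom (G := G) (Ω := Ω)
  have := isPreprimitive_quotient_of_isCoatom hM
  have := faithfulSMul_quotient_of_ne_top hM.1
  obtain ⟨f, hf⟩ := hbase (Shrink.{v} (G ⧸ M)) (toPermHom G _) toPerm_injective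
    isPrimitiveAction_toPermHom
  choose r hr using fun i => QuotientGroup.mk_surjective ((equivShrink _).symm (f i))
  refine ⟨fun i => r i • α, fun g hg => hf g fun i => ?_⟩
  have hfix := stabilizer_smul_le_stabilizer_coe hαM (r i) (hg i)
  rw [mem_stabilizer_iff, hr i, ← equivShrink_symm_smul] at hfix
  exact (equivShrink _).symm.injective hfix

theorem totallyClosed_of_primitive_base_bound_general (G : Type u) [Group G] [Finite G]
    (hsimple : IsSimpleGroup G)
    (b : ℕ)
    (hbase : ∀ (Ω : Type v) (φ : G →* Equiv.Perm Ω), Function.Injective ⇑φ →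
      IsPrimitiveAction φ →
      ∃ f : Fin b → Ω, ∀ g : G, (∀ i, φ g (f i) = f i) → g = 1) :
    TotallyClosed.{u, v} G (b + 1) ∧ closureNumber.{u, v} G ≤ b + 1 := by
  have hclosed : TotallyClosed.{u, v} G (b + 1) := fun Ω φ hφ => by
    obtain ⟨f, hf⟩ := exists_base_of_primitive_base_bound hbase φ hφ
    exact kClosure_succ_eq_range_of_base φ hf
  exact ⟨hclosed, Nat.sInf_le ⟨b.succ_pos, hclosed⟩⟩

/-- Let `G` be a finite nonabelian simple group and `b` a positive integer such that every
faithful primitive action of `G` has a base of size at most `b`. Then `G` is totally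
`(b+1)`-closed; in particular the closure number satisfies `k(G) ≤ b + 1`. -/
theorem totallyClosed_of_primitive_base_bound (G : Type u) [Group G] [Finite G]
    (hnonab : ∃ a b : G, a * b ≠ b * a) (hsimple : IsSimpleGroup G)
    (b : ℕ) (hb : 0 < b)
    (hbase : ∀ (Ω : Type v) (φ : G →* Equiv.Perm Ω), Function.Injective ⇑φ →
      IsPrimitiveAction φ →
      ∃ f : Fin b → Ω, ∀ g : G, (∀ i, φ g (f i) = f i) → g = 1) :
    TotallyClosed.{u, v} G (b + 1) ∧ closureNumber.{u, v} G ≤ b + 1 :=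
  totallyClosed_of_primitive_base_bound_general G hsimple b hbase
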